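/- arXiv:2507.18608 — 3 statements merged into one kernel-verified Lean document; each statement's English description precedes it below -/
import Mathlib

section
/- Let k be an algebraically closed field of characteristic zero and let b ∈ k. The cubic polynomial f_b(X) = (6912 - X)^3 - 27·b·X^2 in k[X] has a repeated root if and only if b = 0 or b = 1728. -/
open Polynomial

set_option maxRecDepth 8000

/-- Let `k` be an algebraically closed field of characteristic zero and
`b ∈ k`. The cubic polynomial `f_b(X) = (6912 - X)^3 - 27·b·X^2` in `k[X]` has a repeated
root (i.e. a root of multiplicity at least 2) if and only if `b = 0` or `b = 1728`. -/
theorem repeated_root_iff (k : Type*) [Field k] [IsAlgClosed k] [CharZero k] (b : k) :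
    (∃ x : k, (X - C x) ^ 2 ∣ ((C 6912 - X) ^ 3 - C (27 * b) * X ^ 2)) ↔
      b = 0 ∨ b = 1728 := by
  constructor
  · rintro ⟨x, q, hq⟩
    have h1 : (6912 - x) ^ 3 - 27 * b * x ^ 2 = 0 := by
      have := congrArg (fun p => p.eval x) hq
      simpa using this
    have h2 : 3 * (6912 - x) ^ 2 + 54 * b * x = 0 := by
      have h := congrArg (fun p => p.derivative.eval x) hq
      simp only [derivative_sub, derivative_mul, derivative_pow, derivative_X, derivative_C,
        eval_sub, eval_mul, eval_add, eval_pow, eval_X, eval_C, eval_ofNat,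
        mul_one, mul_zero, zero_mul, sub_zero, zero_sub, sub_self, eval_zero, add_zero,
        zero_add, eval_neg, eval_one, Nat.cast_ofNat, one_pow, pow_one] at h
      linear_combination -h
    have key : (6912 - x) ^ 2 * (13824 + x) = 0 := by
      linear_combination (2 : k) * h1 + x * h2
    rcases mul_eq_zero.mp key with h | h
    · have hx : x = 6912 := by
        have h' := pow_eq_zero_iff (n := 2) (by norm_num) |>.mp h
        linear_combination -h'
      left
      rw [hx] at h2
      linear_combination (1 / 373248 : k) * h2
    · have hx : x = -13824 := by linear_combination h
      right
      rw [hx] at h1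
      linear_combination (-1 / 5159780352 : k) * h1
  · rintro (rfl | rfl)
    · refine ⟨6912, C 6912 - X, ?_⟩
      have : (27 * (0 : k)) = 0 := by ring
      rw [this]
      simp only [map_ofNat, map_zero]
      ring
    · refine ⟨-13824, C 1728 - X, ?_⟩
      have : (27 * (1728 : k)) = 46656 := by norm_num
      rw [this]
      have h2 : C (-13824 : k) = -(13824 : k[X]) := by
        rw [map_neg]; simp only [map_ofNat]
      simp only [map_ofNat, h2]
      ring
end

section
/- Let k be an algebraically closed field of characteristic zero and let b ∈ k with b ≠ 0 and b ≠ 1728. Then the polynomial f_b(X) = (6912 - X)^3 - 27·b·X^2 has exactly three distinct roots in k, and none of these roots is equal to 0, 6912, 1728, or -13824. -/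
/-!
Expanded, `f_b = -X^3 + (20736 - 27b) X^2 - 3·6912² X + 6912³`, whose cubic discriminant is
`2^26 · 3^18 · b² · (b - 1728)`. For `b ≠ 0, 1728` it is nonzero, so the three roots of `f_b`
are distinct. At the four excluded points `f_b` takes the values `6912³`, `-27·6912²·b`,
`27·1728²·(1728 - b)` and `27·13824²·(1728 - b)`, all nonzero.
-/

open Polynomial

section CommRing

variable {R : Type*} [CommRing R]

noncomputable def fPoly (b : R) : R[X] := (C 6912 - X) ^ 3 - C (27 * b) * X ^ 2

def fCubic (b : R) : Cubic R := ⟨-1, 20736 - 27 * b, -143327232, 330225942528⟩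

theorem fCubic_toPoly (b : R) : (fCubic b).toPoly = fPoly b := by
  simp only [Cubic.toPoly, fCubic, fPoly, map_neg, map_one, map_sub, map_mul, map_ofNat]
  ring

theorem fCubic_discr (b : R) : (fCubic b).discr = 2 ^ 26 * 3 ^ 18 * b ^ 2 * (b - 1728) := by
  simp only [Cubic.discr, fCubic]
  ring

theorem eval_fPoly (b x : R) : (fPoly b).eval x = (6912 - x) ^ 3 - 27 * b * x ^ 2 := by
  simp [fPoly]

end CommRing

section Field

variable {k : Type*} [Field k] [CharZero k] {b : k}

theorem fCubic_discr_ne_zero (hb0 : b ≠ 0) (hb1 : b ≠ 1728) : (fCubic b).discr ≠ 0 := by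
  rw [fCubic_discr]
  exact mul_ne_zero (mul_ne_zero (by norm_num) (pow_ne_zero 2 hb0)) (sub_ne_zero.mpr hb1)

theorem card_roots_toFinset_fPoly [IsAlgClosed k] [DecidableEq k] (hb0 : b ≠ 0)
    (hb1 : b ≠ 1728) : (fPoly b).roots.toFinset.card = 3 := by
  have h := Cubic.card_roots_of_discr_ne_zero (φ := RingHom.id k) (by simp [fCubic])
    (IsAlgClosed.splits _) (fCubic_discr_ne_zero hb0 hb1)
  rwa [Cubic.map_roots, map_id, fCubic_toPoly] at h

theorem ne_of_isRoot_fPoly (hb0 : b ≠ 0) (hb1 : b ≠ 1728) {x : k} (hx : (fPoly b).IsRoot x) :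
    x ≠ 0 ∧ x ≠ 6912 ∧ x ≠ 1728 ∧ x ≠ -13824 := by
  rw [IsRoot, eval_fPoly] at hx
  have hb1' : 1728 - b ≠ 0 := sub_ne_zero.mpr hb1.symm
  refine ⟨?_, ?_, ?_, ?_⟩ <;> rintro rfl
  · norm_num at hx
  · have : -27 * 6912 ^ 2 * b = 0 := by linear_combination hx
    simp_all
  · have : 27 * 1728 ^ 2 * (1728 - b) = 0 := by linear_combination hx
    simp_all
  · have : 27 * 13824 ^ 2 * (1728 - b) = 0 := by linear_combination hx
    simp_all

end Field

/-- Let `k` be an algebraically closed field of characteristic zero and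
`b ∈ k` with `b ≠ 0` and `b ≠ 1728`. Then `f_b(X) = (6912 - X)^3 - 27·b·X^2` has exactly
three distinct roots in `k`, and none of these roots equals `0`, `6912`, `1728`, or `-13824`. -/
theorem three_distinct_roots (k : Type*) [Field k] [IsAlgClosed k] [CharZero k]
    [DecidableEq k] (b : k)
    (hb0 : b ≠ 0) (hb1 : b ≠ 1728) :
    ((C 6912 - X) ^ 3 - C (27 * b) * X ^ 2 : k[X]).roots.toFinset.card = 3 ∧
      ∀ x : k, ((C 6912 - X) ^ 3 - C (27 * b) * X ^ 2 : k[X]).IsRoot x →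
        x ≠ 0 ∧ x ≠ 6912 ∧ x ≠ 1728 ∧ x ≠ -13824 :=
  ⟨card_roots_toFinset_fPoly hb0 hb1, fun _ hx => ne_of_isRoot_fPoly hb0 hb1 hx⟩
end

section
/- Let ω ∈ ℂ be a primitive cube root of unity, B = diag(1, ω, ω²) ∈ GL(3, ℂ), and for g ∈ S₃ let A_g ∈ GL(3, ℂ) be the permutation matrix of g. Then the set {[B^k·A_g] : k ∈ {0,1,2}, g ∈ S₃} of classes in PGL(3, ℂ) is a subgroup of order 18 (in particular the 18 matrices B^k·A_g are pairwise non-proportional), and this subgroup is isomorphic to the semidirect product C₃ ⋊_ψ S₃, where ψ : S₃ → Aut(C₃) ≅ C₂ is the quotient map S₃ → S₃/C₃ ≅ C₂; equivalently, it has presentation ⟨a, b, c | a³ = b³ = c² = 1, ab = ba, cbc = b⁻¹, cac = a⁻¹⟩ with a = [A_{(123)}], b = [B], c = [A_{(12)}]. -/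
/-! Send `(a, g) ∈ C₃ ⋊_ψ S₃` to `[B]^a · [P(g⁻¹)]`, where `P` is the permutation matrix.
Conjugating the diagonal matrix `B` by a permutation matrix permutes its diagonal, and every
permutation of `Fin 3 = ℤ/3` is affine, `i ↦ g 0 + sign(g) · i`; so `[P] [B] [P]⁻¹ = [B]^{sign g}`,
which is exactly the relation defining `ψ`, and the map is a homomorphism. It is injective because
a monomial matrix `diag(d) · P(σ)` with nonzero `d` is scalar only if `σ = 1` and `d` is constant,
and `ω^a = 1` forces `a = 0` in `ℤ/3`. Its image is the set of the 18 classes `[B^k · A_g]`. -/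

open Matrix

/-- The cyclic group of order 3. -/
abbrev C3 := Multiplicative (ZMod 3)

/-- The homomorphism `ℤˣ ≅ C₂ → Aut(C₃)` sending `-1` to inversion. -/
def signToAut : ℤˣ →* MulAut C3 where
  toFun u := if u = 1 then 1 else MulEquiv.inv C3
  map_one' := if_pos rfl
  map_mul' u v := by
    rcases Int.units_eq_one_or u with rfl | rfl <;>
      rcases Int.units_eq_one_or v with rfl | rfl
    · simp
    · simp
    · simp [if_neg (by decide : ¬((-1 : ℤˣ) = 1))]
    · try dsimp only
      rw [if_neg (by decide : ¬((-1 : ℤˣ) = 1)), if_pos (by decide : ((-1 : ℤˣ) * -1 = 1))]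
      ext x
      simp [MulEquiv.inv]
      exact (inv_inv x).symm

/-- The homomorphism `ψ : S₃ → Aut(C₃)`, given by the quotient map
`S₃ → S₃/C₃ ≅ C₂` (i.e. by the sign), with odd permutations acting by inversion. -/
def psi : Equiv.Perm (Fin 3) →* MulAut C3 := signToAut.comp Equiv.Perm.sign

/-- The subgroup of nonzero scalar matrices in `GL(3, ℂ)`. -/
def scalarSubgroup : Subgroup (GL (Fin 3) ℂ) :=
  (Units.map (algebraMap ℂ (Matrix (Fin 3) (Fin 3) ℂ)).toMonoidHom).range

instance : scalarSubgroup.Normal := by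
  constructor
  intro n hn g
  obtain ⟨c, rfl⟩ := hn
  refine ⟨c, Units.ext ?_⟩
  simp only [Units.val_mul, Units.coe_map, RingHom.toMonoidHom_eq_coe, MonoidHom.coe_coe]
  rw [← Algebra.commutes (c : ℂ) ((g : Matrix (Fin 3) (Fin 3) ℂ)), mul_assoc, ← Units.val_mul,
    mul_inv_cancel, Units.val_one, mul_one]

/-- The projective general linear group `PGL(3, ℂ)`, the quotient of `GL(3, ℂ)` by the
subgroup of nonzero scalar matrices. -/
def PGL3 := GL (Fin 3) ℂ ⧸ scalarSubgroup

instance : Group PGL3 := inferInstanceAs (Group (GL (Fin 3) ℂ ⧸ scalarSubgroup))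

/-- The quotient map `GL(3, ℂ) → PGL(3, ℂ)`, `M ↦ [M]`. -/
def toPGL3 : GL (Fin 3) ℂ →* PGL3 := QuotientGroup.mk' scalarSubgroup

open Equiv

section PermutationMatrices

variable {n R : Type*} [DecidableEq n] [Fintype n]

lemma permMatrix_mul_diagonal [NonAssocSemiring R] (σ : Perm n) (d : n → R) :
    σ.permMatrix R * diagonal d = diagonal (d ∘ σ) * σ.permMatrix R := by
  ext i j
  simp only [PEquiv.toMatrix_toPEquiv_mul, PEquiv.mul_toMatrix_toPEquiv, submatrix_apply,
    diagonal_apply, id_eq, Function.comp_apply, eq_symm_apply]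

lemma eq_one_of_diagonal_mul_permMatrix_eq_smul_one [Semiring R] {d : n → R}
    (hd : ∀ i, d i ≠ 0) {σ : Perm n} {c : R} (h : diagonal d * σ.permMatrix R = c • 1) :
    σ = 1 ∧ ∀ i, d i = c := by
  have entry : ∀ i j, (if σ i = j then d i else 0) = if i = j then c else 0 := fun i j => by
    simpa [PEquiv.mul_toMatrix_toPEquiv, diagonal_apply, one_apply, eq_symm_apply, eq_comm]
      using congrFun (congrFun h i) j
  have hσ : ∀ i, σ i = i := fun i => by
    by_contra hne
    have := entry i (σ i)
    rw [if_pos rfl, if_neg (Ne.symm hne)] at this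
    exact hd i this
  refine ⟨Perm.ext hσ, fun i => ?_⟩
  simpa [hσ i] using entry i i

/-- `σ ↦ P(σ⁻¹)`: the inverse is needed since `P(σ * τ) = P(τ) * P(σ)`. -/
def permGL (n R : Type*) [DecidableEq n] [Fintype n] [CommRing R] : Perm n →* GL n R :=
  (permMatrixHom : Perm n →* Matrix n n R).toHomUnits

@[simp]
lemma val_permGL [CommRing R] (σ : Perm n) :
    (permGL n R σ : Matrix n n R) = σ⁻¹.permMatrix R :=
  rfl

end PermutationMatrices

lemma mem_scalarSubgroup_iff {M : GL (Fin 3) ℂ} :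
    M ∈ scalarSubgroup ↔ ∃ c : ℂ, (M : Matrix (Fin 3) (Fin 3) ℂ) = c • 1 := by
  constructor
  · rintro ⟨c, rfl⟩
    exact ⟨c, by simp [Algebra.algebraMap_eq_smul_one]⟩
  · rintro ⟨c, hc⟩
    have hc0 : c ≠ 0 := by
      rintro rfl
      simpa [hc] using M.isUnit.map (detMonoidHom : Matrix (Fin 3) (Fin 3) ℂ →* ℂ)
    exact ⟨Units.mk0 c hc0, Units.ext (by simp [Algebra.algebraMap_eq_smul_one, hc])⟩

lemma toPGL3_eq_one_iff {M : GL (Fin 3) ℂ} :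
    toPGL3 M = 1 ↔ ∃ c : ℂ, (M : Matrix (Fin 3) (Fin 3) ℂ) = c • 1 :=
  (QuotientGroup.eq_one_iff M).trans mem_scalarSubgroup_iff

lemma toPGL3_eq_of_val_eq_smul {X Y : GL (Fin 3) ℂ} {c : ℂ}
    (h : (X : Matrix (Fin 3) (Fin 3) ℂ) = c • (Y : Matrix (Fin 3) (Fin 3) ℂ)) :
    toPGL3 X = toPGL3 Y :=
  (QuotientGroup.eq.2 <| mem_scalarSubgroup_iff.2 ⟨c, by
    rw [Units.val_mul, h, mul_smul_comm, ← Units.val_mul, inv_mul_cancel, Units.val_one]⟩).symm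

def zmodPowHom {G : Type*} [Monoid G] (n : ℕ) [NeZero n] {x : G} (hx : x ^ n = 1) :
    Multiplicative (ZMod n) →* G where
  toFun a := x ^ a.toAdd.val
  map_one' := by simp
  map_mul' a b := by rw [toAdd_mul, ZMod.val_add, ← pow_add, ← pow_eq_pow_mod _ hx]

lemma zmodPowHom_apply {G : Type*} [Monoid G] {n : ℕ} [NeZero n] {x : G} (hx : x ^ n = 1)
    (a : Multiplicative (ZMod n)) : zmodPowHom n hx a = x ^ a.toAdd.val :=
  rfl

lemma zpow_eq_pow_val_intCast {G : Type*} [Group G] {n : ℕ} [NeZero n] {x : G} (hx : x ^ n = 1)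
    (m : ℤ) : x ^ m = x ^ (m : ZMod n).val := by
  rw [← zpow_natCast, ZMod.val_intCast, ← zpow_eq_zpow_emod' m hx]

lemma psi_apply (g : Perm (Fin 3)) (a : C3) : psi g a = a ^ (Perm.sign g : ℤ) := by
  rcases Int.units_eq_one_or (Perm.sign g) with h | h <;> simp [psi, signToAut, h]

lemma pow_eq_pow_of_natCast_eq {M : Type*} [Monoid M] {x : M} {n : ℕ} (hx : x ^ n = 1)
    {a b : ℕ} (h : (a : ZMod n) = b) : x ^ a = x ^ b := by
  rw [pow_eq_pow_mod a hx, pow_eq_pow_mod b hx, (ZMod.natCast_eq_natCast_iff _ _ _).1 h]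

lemma natCast_perm_fin_three_apply (g : Perm (Fin 3)) (i : Fin 3) :
    ((g i : ℕ) : ZMod 3) = (g 0 : ℕ) + (i : ℕ) * (Perm.sign g : ℤ) := by
  revert g i
  decide

section

variable {ω : ℂ} {B : GL (Fin 3) ℂ}

lemma val_pow_eq_diagonal (hB : (B : Matrix (Fin 3) (Fin 3) ℂ) = diagonal ![1, ω, ω ^ 2])
    (m : ℕ) : ((B ^ m : GL (Fin 3) ℂ) : Matrix (Fin 3) (Fin 3) ℂ) =
      diagonal fun i : Fin 3 => ω ^ ((i : ℕ) * m) := by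
  rw [Units.val_pow_eq_pow_val, hB, diagonal_pow]
  congr 1
  funext i
  fin_cases i <;> simp [← pow_mul]

lemma toPGL3_pow_three (hω : IsPrimitiveRoot ω 3)
    (hB : (B : Matrix (Fin 3) (Fin 3) ℂ) = diagonal ![1, ω, ω ^ 2]) : toPGL3 B ^ 3 = 1 := by
  rw [← map_pow, ← map_one toPGL3]
  congr 1
  ext : 1
  rw [val_pow_eq_diagonal hB, Units.val_one, ← diagonal_one]
  congr 1
  funext i
  rw [pow_mul', hω.pow_eq_one, one_pow]

lemma toPGL3_permGL_conj (hω : IsPrimitiveRoot ω 3)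
    (hB : (B : Matrix (Fin 3) (Fin 3) ℂ) = diagonal ![1, ω, ω ^ 2]) (g : Perm (Fin 3)) :
    toPGL3 (permGL (Fin 3) ℂ g) * toPGL3 B * (toPGL3 (permGL (Fin 3) ℂ g))⁻¹ =
      toPGL3 B ^ (Perm.sign g : ℤ) := by
  set e := ((Perm.sign g : ℤ) : ZMod 3).val
  have hB1 := val_pow_eq_diagonal hB 1
  rw [pow_one] at hB1
  have hmat : ((permGL (Fin 3) ℂ g * B : GL (Fin 3) ℂ) : Matrix (Fin 3) (Fin 3) ℂ) =
      ω ^ (g⁻¹ 0 : ℕ) •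
        ((B ^ e * permGL (Fin 3) ℂ g : GL (Fin 3) ℂ) : Matrix (Fin 3) (Fin 3) ℂ) := by
    rw [Units.val_mul, Units.val_mul, val_permGL, hB1, val_pow_eq_diagonal hB,
      permMatrix_mul_diagonal, ← smul_mul_assoc, ← diagonal_smul]
    congr 2
    funext i
    simp only [Function.comp_apply, Pi.smul_apply, smul_eq_mul, mul_one, ← pow_add]
    apply pow_eq_pow_of_natCast_eq hω.pow_eq_one
    push_cast
    rw [ZMod.natCast_zmod_val, natCast_perm_fin_three_apply, Perm.sign_inv]
  rw [zpow_eq_pow_val_intCast (toPGL3_pow_three hω hB), mul_inv_eq_iff_eq_mul, ← map_mul,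
    ← map_pow, ← map_mul]
  exact toPGL3_eq_of_val_eq_smul hmat

lemma zmodPowHom_comp_psi (hω : IsPrimitiveRoot ω 3)
    (hB : (B : Matrix (Fin 3) (Fin 3) ℂ) = diagonal ![1, ω, ω ^ 2]) (g : Perm (Fin 3)) :
    (zmodPowHom 3 (toPGL3_pow_three hω hB)).comp (psi g).toMonoidHom =
      (MulAut.conj ((toPGL3.comp (permGL (Fin 3) ℂ)) g)).toMonoidHom.comp
        (zmodPowHom 3 (toPGL3_pow_three hω hB)) := by
  refine MonoidHom.ext fun a => ?_
  simp only [MonoidHom.comp_apply, MulEquiv.coe_toMonoidHom, psi_apply, map_zpow,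
    zmodPowHom_apply, map_pow, MulAut.conj_apply, toPGL3_permGL_conj hω hB]
  rw [← zpow_natCast, ← zpow_natCast, ← _root_.zpow_mul, ← _root_.zpow_mul, mul_comm]

def semidirectProductToPGL3 (hω : IsPrimitiveRoot ω 3)
    (hB : (B : Matrix (Fin 3) (Fin 3) ℂ) = diagonal ![1, ω, ω ^ 2]) :
    C3 ⋊[psi] Perm (Fin 3) →* PGL3 :=
  SemidirectProduct.lift _ _ (zmodPowHom_comp_psi hω hB)

lemma semidirectProductToPGL3_apply (hω : IsPrimitiveRoot ω 3)
    (hB : (B : Matrix (Fin 3) (Fin 3) ℂ) = diagonal ![1, ω, ω ^ 2])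
    (x : C3 ⋊[psi] Perm (Fin 3)) : semidirectProductToPGL3 hω hB x =
      toPGL3 (B ^ x.left.toAdd.val * permGL (Fin 3) ℂ x.right) := by
  rw [map_mul, map_pow]
  rfl

lemma semidirectProductToPGL3_injective (hω : IsPrimitiveRoot ω 3)
    (hB : (B : Matrix (Fin 3) (Fin 3) ℂ) = diagonal ![1, ω, ω ^ 2]) :
    Function.Injective (semidirectProductToPGL3 hω hB) := by
  refine (injective_iff_map_eq_one _).2 fun ⟨a, g⟩ h => ?_
  rw [semidirectProductToPGL3_apply, toPGL3_eq_one_iff] at h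
  obtain ⟨c, hc⟩ := h
  rw [Units.val_mul, val_pow_eq_diagonal hB, val_permGL] at hc
  obtain ⟨hg, hd⟩ := eq_one_of_diagonal_mul_permMatrix_eq_smul_one
    (fun i => pow_ne_zero _ (hω.ne_zero three_ne_zero)) hc
  have hc1 : c = 1 := by simpa using (hd 0).symm
  have ha : ω ^ a.toAdd.val = 1 := by simpa [hc1] using hd 1
  have ha0 : a.toAdd = 0 := (ZMod.val_eq_zero _).1 <|
    Nat.eq_zero_of_dvd_of_lt ((hω.pow_eq_one_iff_dvd _).1 ha) (ZMod.val_lt _)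
  exact SemidirectProduct.ext (by simpa using ha0) (by simpa using hg)

end

/-- Let `ω ∈ ℂ` be a primitive cube root of unity, `B = diag(1, ω, ω²)`,
and for `g ∈ S₃` let `A_g` be the permutation matrix of `g`. The set
`{[B^k·A_g] : k ∈ {0,1,2}, g ∈ S₃}` of classes in `PGL(3, ℂ)` is a subgroup of order 18
(in particular the 18 matrices `B^k·A_g` are pairwise non-proportional), isomorphic to the
semidirect product `C₃ ⋊_ψ S₃`, where `ψ : S₃ → Aut(C₃) ≅ C₂` is given by the quotient
map `S₃ → S₃/C₃ ≅ C₂`. -/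
theorem stabilizer_subgroup_structure (ω : ℂ) (hω : IsPrimitiveRoot ω 3)
    (B : GL (Fin 3) ℂ) (hB : (B : Matrix (Fin 3) (Fin 3) ℂ) = Matrix.diagonal ![1, ω, ω ^ 2])
    (A : Equiv.Perm (Fin 3) → GL (Fin 3) ℂ)
    (hA : ∀ g, (A g : Matrix (Fin 3) (Fin 3) ℂ) = Matrix.of fun i j => if g i = j then 1 else 0) :
    ∃ H : Subgroup PGL3,
      (H : Set PGL3) =
          {x : PGL3 | ∃ (k : Fin 3) (g : Equiv.Perm (Fin 3)), x = toPGL3 (B ^ (k : ℕ) * A g)} ∧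
      Function.Injective
          (fun p : Fin 3 × Equiv.Perm (Fin 3) => toPGL3 (B ^ (p.1 : ℕ) * A p.2)) ∧
      Nat.card H = 18 ∧
      Nonempty (H ≃* C3 ⋊[psi] Equiv.Perm (Fin 3)) := by
  have hA' : ∀ g, A g = permGL (Fin 3) ℂ g⁻¹ := fun g => Units.ext <| by
    rw [hA, val_permGL, inv_inv]
    ext i j
    simp
  set f := semidirectProductToPGL3 hω hB
  have hf : Function.Injective f := semidirectProductToPGL3_injective hω hB
  let e : Fin 3 × Perm (Fin 3) ≃ C3 ⋊[psi] Perm (Fin 3) :=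
    ((ZMod.finEquiv 3).toEquiv.trans Multiplicative.ofAdd).prodCongr (Equiv.inv _) |>.trans
      SemidirectProduct.equivProd.symm
  have hfe : f ∘ e = fun p => toPGL3 (B ^ (p.1 : ℕ) * A p.2) := funext fun p => by
    rw [Function.comp_apply, semidirectProductToPGL3_apply, hA']
    rfl
  refine ⟨f.range, ?_, hfe ▸ hf.comp e.injective, ?_, ⟨(MonoidHom.ofInjective hf).symm⟩⟩
  · rw [MonoidHom.coe_range, ← e.surjective.range_comp, hfe]
    ext x
    simp [eq_comm]
  · rw [Nat.card_congr (MonoidHom.ofInjective hf).toEquiv.symm, ← Nat.card_congr e]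
    simp [Fintype.card_perm, Nat.factorial]
end
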